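/- arXiv:0906.0696 — 5 statements merged into one kernel-verified Lean document; each statement's English description precedes it below -/
import Mathlib

section
/- (Spivey's identity) For all positive integers n and j, B_{n+j} = \sum_{k=1}^{n} P_j(k) * S(n,k), where P_j(x) = \sum_{r=0}^{j} B_{j-r} * C(j,r) * x^r. -/
/-!
Let `T f x = f (x + 1) + x * f x`. The Stirling recurrence says that
`∑ₖ f k * S(n+1, k) = ∑ₖ (T f) k * S(n, k)`, hence `∑ₖ f k * S(n, k) = (Tⁿ f) 0`, and in
particular `B_m = (Tᵐ 1) 0`. Therefore `B_{n+j} = (Tⁿ (Tʲ 1)) 0 = ∑ₖ (Tʲ 1) k * S(n, k)`, and it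
remains to see that `Tʲ 1 = P_j`. Shifting the argument by `a` conjugates `T` into `T + a`, and
`T` commutes with the scalar `a`, so the binomial theorem gives
`(Tʲ 1) a = ∑ᵣ C(j, r) aʳ (T^{j-r} 1) 0 = ∑ᵣ C(j, r) aʳ B_{j-r}`.
-/

/-- Stirling numbers of the second kind. -/
def stirling : ℕ → ℕ → ℕ
  | 0, 0 => 1
  | 0, _ + 1 => 0
  | _ + 1, 0 => 0
  | n + 1, k + 1 => stirling n k + (k + 1) * stirling n (k + 1)

/-- The `n`-th Bell number. -/
def bell (n : ℕ) : ℕ := ∑ k ∈ Finset.range (n + 1), stirling n k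

open Finset Nat

lemma stirling_eq_stirlingSecond : stirling = stirlingSecond := by
  funext n k
  induction n generalizing k with
  | zero => cases k <;> rfl
  | succ n ih => cases k <;> simp [stirling, stirlingSecond, ih, add_comm]

def stirlingOp : Module.End ℕ (ℕ → ℕ) where
  toFun f x := f (x + 1) + x * f x
  map_add' f g := by funext x; simp only [Pi.add_apply]; ring
  map_smul' c f := by funext x; simp only [Pi.smul_apply, smul_eq_mul, RingHom.id_apply]; ring

@[simp]
lemma stirlingOp_apply (f : ℕ → ℕ) (x : ℕ) : stirlingOp f x = f (x + 1) + x * f x := rfl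

lemma sum_mul_stirlingSecond_succ (n : ℕ) (f : ℕ → ℕ) :
    ∑ k ∈ range (n + 2), f k * stirlingSecond (n + 1) k =
      ∑ k ∈ range (n + 1), stirlingOp f k * stirlingSecond n k := by
  have hshift : ∑ k ∈ range (n + 1), (k + 1) * f (k + 1) * stirlingSecond n (k + 1) =
      ∑ k ∈ range (n + 1), k * f k * stirlingSecond n k := by
    rw [sum_range_succ, stirlingSecond_eq_zero_of_lt (by omega), sum_range_succ' _ n]
    simp
  simp only [stirlingOp_apply, add_mul, sum_add_distrib]
  rw [sum_range_succ', stirlingSecond_succ_zero, mul_zero, add_zero, ← hshift,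
    ← sum_add_distrib]
  exact sum_congr rfl fun k _ => by rw [stirlingSecond_succ_succ]; ring

lemma sum_mul_stirlingSecond_eq_pow_apply (n : ℕ) (f : ℕ → ℕ) :
    ∑ k ∈ range (n + 1), f k * stirlingSecond n k = (stirlingOp ^ n) f 0 := by
  induction n generalizing f with
  | zero => simp
  | succ n ih => rw [sum_mul_stirlingSecond_succ, ih, pow_succ, Module.End.mul_apply]

lemma bell_eq_stirlingOp_pow_apply (n : ℕ) : bell n = (stirlingOp ^ n) 1 0 := by
  simpa only [bell, stirling_eq_stirlingSecond, Pi.one_apply, one_mul] using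
    sum_mul_stirlingSecond_eq_pow_apply n 1

def shiftOp (a : ℕ) : Module.End ℕ (ℕ → ℕ) := LinearMap.funLeft ℕ ℕ (· + a)

@[simp]
lemma shiftOp_apply (a : ℕ) (f : ℕ → ℕ) (x : ℕ) : shiftOp a f x = f (x + a) := rfl

lemma semiconjBy_shiftOp_stirlingOp (a : ℕ) :
    SemiconjBy (shiftOp a) stirlingOp (a + stirlingOp) := by
  refine LinearMap.ext fun f => funext fun x => ?_
  simp only [Module.End.mul_apply, shiftOp_apply, stirlingOp_apply, LinearMap.add_apply,
    Module.End.natCast_apply, nsmul_eq_mul, Pi.add_apply, Pi.mul_apply, Pi.natCast_apply, cast_id,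
    add_right_comm x 1 a]
  ring

lemma stirlingOp_pow_apply (j a : ℕ) (f : ℕ → ℕ) :
    (stirlingOp ^ j) f a =
      ∑ r ∈ range (j + 1), a ^ r * (stirlingOp ^ (j - r)) (shiftOp a f) 0 * j.choose r := by
  have h := congr($((semiconjBy_shiftOp_stirlingOp a).pow_right j) f 0)
  rw [(Nat.cast_commute a stirlingOp).add_pow] at h
  simp only [← Nat.cast_pow, Module.End.mul_apply, Module.End.natCast_apply, LinearMap.sum_apply,
    Finset.sum_apply, map_nsmul, Pi.smul_apply, smul_eq_mul, shiftOp_apply, zero_add] at h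
  rw [h]
  exact sum_congr rfl fun r _ => by ring

lemma stirlingOp_pow_one_apply (j a : ℕ) :
    (stirlingOp ^ j) 1 a = ∑ r ∈ range (j + 1), bell (j - r) * j.choose r * a ^ r := by
  rw [stirlingOp_pow_apply]
  refine sum_congr rfl fun r _ => ?_
  rw [show shiftOp a 1 = 1 from rfl, ← bell_eq_stirlingOp_pow_apply]
  ring

theorem spivey_identity_general (n j : ℕ) (hn : 0 < n) :
    bell (n + j) =
      ∑ k ∈ Finset.Icc 1 n,
        (∑ r ∈ Finset.range (j + 1), bell (j - r) * Nat.choose j r * k ^ r) * stirling n k := by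
  rw [bell_eq_stirlingOp_pow_apply, pow_add, Module.End.mul_apply,
    ← sum_mul_stirlingSecond_eq_pow_apply, stirling_eq_stirlingSecond]
  simp only [stirlingOp_pow_one_apply]
  refine (sum_subset (fun k hk => ?_) fun k hk hk' => ?_).symm
  · simp only [mem_Icc, mem_range] at hk ⊢
    omega
  · obtain rfl : k = 0 := by
      simp only [mem_range, mem_Icc, not_and, not_le] at hk hk'
      omega
    obtain ⟨m, rfl⟩ := Nat.exists_eq_succ_of_ne_zero hn.ne'
    rw [stirlingSecond_succ_zero, mul_zero]

theorem spivey_identity (n j : ℕ) (hn : 0 < n) (hj : 0 < j) :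
    bell (n + j) =
      ∑ k ∈ Finset.Icc 1 n,
        (∑ r ∈ Finset.range (j + 1), bell (j - r) * Nat.choose j r * k ^ r) * stirling n k :=
  spivey_identity_general n j hn
end

section
/- For all positive integers n, B_{n+2} = \sum_{k=1}^{n} (k^2 + 2k + 2) * S(n,k). -/
lemma stirling_eq_zero : ∀ n k : ℕ, n < k → stirling n k = 0
  | 0, _ + 1, _ => rfl
  | n + 1, k + 1, h => by
    simp [stirling, stirling_eq_zero n k (by omega), stirling_eq_zero n (k+1) (by omega)]

lemma shift (n : ℕ) (f : ℕ → ℕ) :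
    ∑ k ∈ Finset.range (n + 2), f k * stirling (n + 1) k
      = ∑ k ∈ Finset.range (n + 1), (f (k + 1) + k * f k) * stirling n k := by
  rw [Finset.sum_range_succ' (fun k => f k * stirling (n+1) k)]
  have key : ∑ k ∈ Finset.range (n+1), (k+1) * f (k+1) * stirling n (k+1)
      = ∑ k ∈ Finset.range (n+1), k * f k * stirling n k := by
    have h1 := Finset.sum_range_succ' (fun k => k * f k * stirling n k) (n+1)
    have h2 := Finset.sum_range_succ (fun k => k * f k * stirling n k) (n+1)
    rw [stirling_eq_zero n (n+1) (by omega)] at h2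
    simp at h1 h2
    omega
  calc (∑ k ∈ Finset.range (n+1), f (k+1) * stirling (n+1) (k+1))
        + f 0 * stirling (n+1) 0
      = ∑ k ∈ Finset.range (n+1),
          (f (k+1) * stirling n k + (k+1) * f (k+1) * stirling n (k+1)) := by
        simp [stirling]; apply Finset.sum_congr rfl; intro k _; ring
    _ = (∑ k ∈ Finset.range (n+1), f (k+1) * stirling n k)
        + ∑ k ∈ Finset.range (n+1), (k+1) * f (k+1) * stirling n (k+1) := by
        rw [Finset.sum_add_distrib]
    _ = _ := by rw [key, ← Finset.sum_add_distrib]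
                apply Finset.sum_congr rfl; intro k _; ring

theorem bell_add_two (n : ℕ) (hn : 0 < n) :
    bell (n + 2) = ∑ k ∈ Finset.Icc 1 n, (k ^ 2 + 2 * k + 2) * stirling n k := by
  have h1 : bell (n + 2) = ∑ k ∈ Finset.range (n + 3), 1 * stirling (n + 2) k := by
    simp [bell]
  rw [h1, show n + 3 = (n+1) + 2 from rfl, shift (n+1) (fun _ => 1)]
  have h2 : ∑ k ∈ Finset.range (n + 2), ((1:ℕ) + k * 1) * stirling (n + 1) k
      = ∑ k ∈ Finset.range (n + 1), ((k + 2) + k * (k + 1)) * stirling n k := by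
    rw [shift n (fun k => 1 + k * 1)]
    apply Finset.sum_congr rfl; intro k _; ring
  rw [h2]
  rw [show ∑ k ∈ Finset.Icc 1 n, (k ^ 2 + 2 * k + 2) * stirling n k
      = ∑ k ∈ Finset.range (n+1), (k ^ 2 + 2 * k + 2) * stirling n k from ?_]
  · apply Finset.sum_congr rfl; intro k _; ring
  · apply Finset.sum_subset
    · intro k hk; simp at hk ⊢; omega
    · intro k hk hk'
      simp at hk hk'
      have : k = 0 := by omega
      subst this
      have : stirling n 0 = 0 := by cases n with | zero => omega | succ m => rfl
      simp [this]
end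

section
/- For all positive integers n, B_{n+5} = \sum_{k=1}^{n} (k^5 + 5k^4 + 20k^3 + 50k^2 + 75k + 52) * S(n,k). -/
open Finset

theorem stirling_succ_zero (n : ℕ) : stirling (n + 1) 0 = 0 := rfl

theorem stirling_succ_succ (n k : ℕ) :
    stirling (n + 1) (k + 1) = stirling n k + (k + 1) * stirling n (k + 1) := rfl

theorem stirling_eq_zero_of_lt : ∀ {n k : ℕ}, n < k → stirling n k = 0
  | 0, _ + 1, _ => rfl
  | n + 1, k + 1, h => by
    rw [stirling_succ_succ, stirling_eq_zero_of_lt (by omega : n < k),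
      stirling_eq_zero_of_lt (by omega : n < k + 1), mul_zero, add_zero]

section WeightedSum

variable {R : Type*} [CommSemiring R]

theorem sum_range_add_two_mul_stirling (f : ℕ → R) (n : ℕ) :
    ∑ k ∈ range (n + 2), f k * stirling n k = ∑ k ∈ range (n + 1), f k * stirling n k := by
  rw [sum_range_succ, stirling_eq_zero_of_lt (Nat.lt_succ_self n), Nat.cast_zero, mul_zero,
    add_zero]

theorem sum_mul_stirling_succ {f g : ℕ → R} (hfg : ∀ k, g k = f (k + 1) + k * f k) (n : ℕ) :
    ∑ k ∈ range (n + 2), f k * stirling (n + 1) k =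
      ∑ k ∈ range (n + 1), g k * stirling n k := by
  have hshift : ∑ k ∈ range (n + 1), f (k + 1) * ((k + 1) * stirling n (k + 1)) =
      ∑ k ∈ range (n + 1), k * f k * stirling n k := by
    rw [← sum_range_add_two_mul_stirling, sum_range_succ' _ (n + 1)]
    simp only [Nat.cast_zero, zero_mul, add_zero]
    exact sum_congr rfl fun k _ => by push_cast; ring
  calc ∑ k ∈ range (n + 2), f k * stirling (n + 1) k
      = ∑ k ∈ range (n + 1),
          (f (k + 1) * stirling n k + f (k + 1) * ((k + 1) * stirling n (k + 1))) := by
        rw [sum_range_succ', stirling_succ_zero, Nat.cast_zero, mul_zero, add_zero]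
        exact sum_congr rfl fun k _ => by rw [stirling_succ_succ]; push_cast; ring
    _ = ∑ k ∈ range (n + 1), (f (k + 1) * stirling n k + k * f k * stirling n k) := by
        rw [sum_add_distrib, hshift, sum_add_distrib]
    _ = ∑ k ∈ range (n + 1), g k * stirling n k :=
        sum_congr rfl fun k _ => by rw [hfg]; ring

theorem sum_range_mul_stirling_eq_sum_Icc (f : ℕ → R) {n : ℕ} (hn : 0 < n) :
    ∑ k ∈ range (n + 1), f k * stirling n k = ∑ k ∈ Icc 1 n, f k * stirling n k := by
  refine (sum_subset (fun k hk => ?_) fun k hk hk' => ?_).symm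
  · simp only [mem_Icc, mem_range] at hk ⊢
    omega
  · obtain rfl : k = 0 := by simp only [mem_Icc, mem_range] at hk hk'; omega
    obtain ⟨m, rfl⟩ := Nat.exists_eq_add_of_lt hn
    rw [stirling_succ_zero, Nat.cast_zero, mul_zero]

end WeightedSum

theorem bell_add_five (n : ℕ) (hn : 0 < n) :
    bell (n + 5) =
      ∑ k ∈ Finset.Icc 1 n,
        (k ^ 5 + 5 * k ^ 4 + 20 * k ^ 3 + 50 * k ^ 2 + 75 * k + 52) * stirling n k := by
  calc bell (n + 5)
      = ∑ k ∈ range (n + 6), 1 * stirling (n + 5) k := by simp [bell]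
    _ = ∑ k ∈ range (n + 5), (k + 1) * stirling (n + 4) k :=
        sum_mul_stirling_succ (fun k => by rw [Nat.cast_id]; ring) _
    _ = ∑ k ∈ range (n + 4), (k ^ 2 + 2 * k + 2) * stirling (n + 3) k :=
        sum_mul_stirling_succ (fun k => by rw [Nat.cast_id]; ring) _
    _ = ∑ k ∈ range (n + 3), (k ^ 3 + 3 * k ^ 2 + 6 * k + 5) * stirling (n + 2) k :=
        sum_mul_stirling_succ (fun k => by rw [Nat.cast_id]; ring) _
    _ = ∑ k ∈ range (n + 2),
          (k ^ 4 + 4 * k ^ 3 + 12 * k ^ 2 + 20 * k + 15) * stirling (n + 1) k :=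
        sum_mul_stirling_succ (fun k => by rw [Nat.cast_id]; ring) _
    _ = ∑ k ∈ range (n + 1),
          (k ^ 5 + 5 * k ^ 4 + 20 * k ^ 3 + 50 * k ^ 2 + 75 * k + 52) * stirling n k :=
        sum_mul_stirling_succ (fun k => by rw [Nat.cast_id]; ring) _
    _ = _ := sum_range_mul_stirling_eq_sum_Icc _ hn
end

section
/- (Touchard's congruence, generalized) For every prime p and positive integers n and m, B_{n+p^m} \equiv m * B_n + B_{n+1} (mod p). -/
/-!
Let `L` (`bellFunctional`) be the linear functional on `(ZMod p)[X]` sending every falling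
factorial `(X)ₖ` to `1`. Expanding `X ^ n` in falling factorials with Stirling numbers of the
second kind gives `L (X ^ n) = B n`. Over `ZMod p` we have `(X)ₚ = X ^ p - X`, and shifting it by
`k` does not change it, so `(X)ₖ * (X ^ p - X) = (X)ₖ₊ₚ`; hence `L (f * (X ^ p - X)) = L f` for
every `f`. By Frobenius, `X ^ p ^ (m + 1) = X ^ p ^ m + (X ^ p - X) ^ p ^ m`, so
`B (n + p ^ (m + 1)) = B (n + p ^ m) + B n`, and induction on `m` gives the congruence.
-/

open Polynomial Finset

theorem stirling_eq_stirlingSecond_s13 : ∀ n k, stirling n k = Nat.stirlingSecond n k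
  | 0, 0 | 0, _ + 1 | _ + 1, 0 => rfl
  | n + 1, k + 1 => by
    rw [stirling, Nat.stirlingSecond_succ_succ, stirling_eq_stirlingSecond_s13 n k,
      stirling_eq_stirlingSecond_s13 n (k + 1), add_comm]

section Ring

variable (R : Type*) [Ring R]

theorem X_mul_descPochhammer (k : ℕ) :
    X * descPochhammer R k = descPochhammer R (k + 1) + k • descPochhammer R k := by
  rw [descPochhammer_succ_right, nsmul_eq_mul, Nat.cast_comm, mul_sub, X_mul, sub_add_cancel]

theorem sum_stirling_smul_descPochhammer (n : ℕ) :
    ∑ k ∈ range (n + 1), stirling n k • descPochhammer R k = X ^ n := by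
  induction n with
  | zero => simp [stirling]
  | succ n ih =>
    set f : ℕ → R[X] := fun k => (k * stirling n k) • descPochhammer R k
    have hshift : ∑ k ∈ range (n + 1), ((k + 1) * stirling n (k + 1)) • descPochhammer R (k + 1)
        = ∑ k ∈ range (n + 1), f k := by
      calc _ = ∑ k ∈ range (n + 1), f (k + 1) + f 0 := by simp [f]
        _ = ∑ k ∈ range (n + 1), f k + f (n + 1) := by rw [← sum_range_succ', sum_range_succ]
        _ = _ := by simp [f, stirling_eq_stirlingSecond_s13, Nat.stirlingSecond_eq_zero_of_lt]
    calc ∑ k ∈ range (n + 2), stirling (n + 1) k • descPochhammer R k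
        = ∑ k ∈ range (n + 1), stirling n k • descPochhammer R (k + 1)
          + ∑ k ∈ range (n + 1), ((k + 1) * stirling n (k + 1)) • descPochhammer R (k + 1) := by
          rw [sum_range_succ', ← sum_add_distrib]
          simp [stirling, add_smul]
      _ = X * ∑ k ∈ range (n + 1), stirling n k • descPochhammer R k := by
          rw [hshift, mul_sum, ← sum_add_distrib]
          refine sum_congr rfl fun k _ => ?_
          rw [mul_smul_comm, X_mul_descPochhammer, smul_add, smul_smul, mul_comm]
      _ = X ^ (n + 1) := by rw [ih, pow_succ']

end Ring

section BellFunctional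

variable (R : Type*) [CommRing R] [IsDomain R]

noncomputable def descPochhammerSequence : Sequence R where
  elems' := descPochhammer R
  degree_eq' k := by
    rw [degree_eq_natDegree (monic_descPochhammer R k).ne_zero, descPochhammer_natDegree]

noncomputable def descPochhammerBasis : Module.Basis ℕ R R[X] :=
  (descPochhammerSequence R).basis fun k => by
    simp [descPochhammerSequence, (monic_descPochhammer R k).leadingCoeff]

@[simp]
theorem descPochhammerBasis_apply (k : ℕ) : descPochhammerBasis R k = descPochhammer R k :=
  Sequence.basis_eq_self _ _ k

noncomputable def bellFunctional : R[X] →ₗ[R] R :=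
  (descPochhammerBasis R).constr R fun _ => 1

@[simp]
theorem bellFunctional_descPochhammer (k : ℕ) : bellFunctional R (descPochhammer R k) = 1 := by
  rw [← descPochhammerBasis_apply, bellFunctional, Module.Basis.constr_basis]

theorem bellFunctional_X_pow (n : ℕ) : bellFunctional R (X ^ n) = bell n := by
  simp only [← sum_stirling_smul_descPochhammer R n, map_sum, map_nsmul,
    bellFunctional_descPochhammer, nsmul_one, bell, Nat.cast_sum]

end BellFunctional

section ZMod

variable {p : ℕ} [Fact p.Prime]

theorem descPochhammer_zmod_eq_X_pow_sub_X : descPochhammer (ZMod p) p = X ^ p - X := by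
  have hp : 1 < p := Fact.out (p := p.Prime) |>.one_lt
  refine eq_of_degree_sub_lt_of_eval_finset_eq univ ?_ fun a _ => ?_
  · have hD := monic_descPochhammer (ZMod p) p
    have hT : (X ^ p - X : (ZMod p)[X]).Monic := monic_X_pow_sub (by simpa using hp)
    have hdegD : (descPochhammer (ZMod p) p).degree = p := by
      rw [degree_eq_natDegree hD.ne_zero, descPochhammer_natDegree]
    have hdegT : (X ^ p - X : (ZMod p)[X]).degree = p := by
      rw [degree_eq_natDegree hT.ne_zero, FiniteField.X_pow_card_sub_X_natDegree_eq _ hp]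
    rw [card_univ, ZMod.card, ← hdegD]
    exact degree_sub_lt_left (hdegD.trans hdegT.symm) hD.ne_zero (hD.trans hT.symm)
  · rw [descPochhammer_eval_eq_prod_range, eval_sub, eval_pow, eval_X, ZMod.pow_card, sub_self]
    exact prod_eq_zero (mem_range.2 a.val_lt) (by simp)

theorem descPochhammer_mul_X_pow_sub_X (k : ℕ) :
    descPochhammer (ZMod p) k * (X ^ p - X) = descPochhammer (ZMod p) (k + p) := by
  have hk : (k : (ZMod p)[X]) ^ p = k := by rw [← map_natCast C, ← C_pow, ZMod.pow_card]
  rw [← descPochhammer_mul, descPochhammer_zmod_eq_X_pow_sub_X, sub_comp, pow_comp, X_comp,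
    sub_pow_char, hk]
  ring

theorem bellFunctional_mul_X_pow_sub_X (f : (ZMod p)[X]) :
    bellFunctional (ZMod p) (f * (X ^ p - X)) = bellFunctional (ZMod p) f := by
  have h : bellFunctional (ZMod p) ∘ₗ LinearMap.mulRight (ZMod p) (X ^ p - X)
      = bellFunctional (ZMod p) :=
    (descPochhammerBasis (ZMod p)).ext fun k => by simp [descPochhammer_mul_X_pow_sub_X]
  exact LinearMap.congr_fun h f

theorem bellFunctional_mul_pow_X_pow_sub_X (f : (ZMod p)[X]) (j : ℕ) :
    bellFunctional (ZMod p) (f * (X ^ p - X) ^ j) = bellFunctional (ZMod p) f := by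
  induction j with
  | zero => simp
  | succ j ih => rw [pow_succ, ← mul_assoc, bellFunctional_mul_X_pow_sub_X, ih]

theorem bell_add_prime_pow (n m : ℕ) :
    (bell (n + p ^ m) : ZMod p) = m * bell n + bell (n + 1) := by
  induction m with
  | zero => simp
  | succ m ih =>
    have hfrob : (X : (ZMod p)[X]) ^ p ^ (m + 1) = X ^ p ^ m + (X ^ p - X) ^ p ^ m := by
      rw [sub_pow_char_pow, ← pow_mul, ← pow_succ']
      ring
    rw [← bellFunctional_X_pow, pow_add, hfrob, mul_add, map_add,
      bellFunctional_mul_pow_X_pow_sub_X, ← pow_add, bellFunctional_X_pow, bellFunctional_X_pow, ih]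
    push_cast
    ring

end ZMod

theorem touchard_general_general (p n m : ℕ) (hp : p.Prime) :
    bell (n + p ^ m) ≡ m * bell n + bell (n + 1) [MOD p] := by
  have := Fact.mk hp
  rw [← ZMod.natCast_eq_natCast_iff]
  push_cast
  exact bell_add_prime_pow n m

theorem touchard_general (p n m : ℕ) (hp : p.Prime) (hn : 0 < n) (hm : 0 < m) :
    bell (n + p ^ m) ≡ m * bell n + bell (n + 1) [MOD p] :=
  touchard_general_general p n m hp
end

section
/- Let p be prime and m a positive integer. The partitions of Z/p^m Z fixed by all translations x \mapsto x + y are exactly the m+1 partitions into cosets of the subgroups p^j * Z/p^m Z for 0 \le j \le m; in particular there are exactly m+1 such fixed partitions. -/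
/-!
In a partition of an abelian group fixed by all translations, translating the block `H` containing
`0` by one of its elements gives a block meeting `H`, hence `H` itself; so `H` is a subgroup and the
blocks, being translates of `H`, are its cosets. The subgroups of `ℤ/p^mℤ` are the images of the
subgroups `dℤ` of `ℤ` with `d ∣ p^m`, that is the `p^j ℤ/p^mℤ` with `j ≤ m`, and these are
distinct since they have orders `p^(m-j)`.
-/

open scoped Pointwise

section Translation

variable {α : Type*} [AddCommGroup α]

def cosetPartition (H : AddSubgroup α) : Set (Set α) :=
  {S | ∃ x : α, S = x +ᵥ (H : Set α)}

def IsTranslationInvariant (P : Set (Set α)) : Prop :=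
  ∀ y : α, ∀ A ∈ P, (fun x => x + y) '' A ∈ P

theorem isPartition_cosetPartition (H : AddSubgroup α) :
    Setoid.IsPartition (cosetPartition H) := by
  refine ⟨fun ⟨x, hx⟩ => (hx ▸ mem_own_leftAddCoset H.toAddSubmonoid x : x ∈ (∅ : Set α)), ?_⟩
  intro a
  refine ⟨a +ᵥ (H : Set α), ⟨⟨a, rfl⟩, mem_own_leftAddCoset H.toAddSubmonoid a⟩, ?_⟩
  rintro S ⟨⟨x, rfl⟩, ha⟩
  exact (leftAddCoset_eq_iff H).2 ((mem_leftAddCoset_iff x).1 ha)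

theorem isTranslationInvariant_cosetPartition (H : AddSubgroup α) :
    IsTranslationInvariant (cosetPartition H) := by
  rintro y _ ⟨x, rfl⟩
  refine ⟨y + x, ?_⟩
  rw [← Set.image_vadd, Set.image_image, ← Set.image_vadd]
  exact Set.image_congr fun z _ => by simp only [vadd_eq_add]; abel

theorem cosetPartition_injective : Function.Injective (cosetPartition (α := α)) := by
  intro H K hHK
  have hH : (H : Set α) ∈ cosetPartition K := hHK ▸ ⟨0, (zero_vadd α _).symm⟩
  have hK : (K : Set α) ∈ cosetPartition K := ⟨0, (zero_vadd α _).symm⟩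
  exact SetLike.coe_injective <| Setoid.eq_of_mem_eqv_class (isPartition_cosetPartition K).2
    hH H.zero_mem hK K.zero_mem

def AddSubgroup.ofTranslateEq (A : Set α) (h0 : 0 ∈ A) (h : ∀ b ∈ A, (· + b) '' A = A) :
    AddSubgroup α where
  carrier := A
  zero_mem' := h0
  add_mem' {a b} ha hb := h b hb ▸ ⟨a, ha, rfl⟩
  neg_mem' {b} hb := by
    obtain ⟨a, ha, hab⟩ : (0 : α) ∈ (· + b) '' A := (h b hb).symm ▸ h0
    rwa [eq_neg_of_add_eq_zero_left hab] at ha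

theorem exists_eq_cosetPartition {P : Set (Set α)} (hP : Setoid.IsPartition P)
    (hT : IsTranslationInvariant P) : ∃ H : AddSubgroup α, P = cosetPartition H := by
  have block_eq {a : α} {A B : Set α} (hA : A ∈ P) (hB : B ∈ P) (ha : a ∈ A) (hb : a ∈ B) :
      A = B := Setoid.eq_of_mem_eqv_class hP.2 hA ha hB hb
  obtain ⟨A₀, ⟨hA₀, h0⟩, -⟩ := hP.2 0
  have mem_translate (a : α) : a ∈ (· + a) '' A₀ := ⟨0, h0, zero_add a⟩
  let H := AddSubgroup.ofTranslateEq A₀ h0 fun b hb =>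
    block_eq (hT b A₀ hA₀) hA₀ (mem_translate b) hb
  refine ⟨H, Set.ext fun S => ⟨fun hS => ?_, ?_⟩⟩
  · obtain ⟨a, ha⟩ := Setoid.nonempty_of_mem_partition hP hS
    refine ⟨a, ?_⟩
    rw [block_eq hS (hT a A₀ hA₀) ha (mem_translate a), ← Set.image_vadd]
    exact Set.image_congr fun z _ => add_comm z a
  · rintro ⟨x, rfl⟩
    rw [← Set.image_vadd]
    convert hT x A₀ hA₀ using 1
    exact Set.image_congr fun z _ => add_comm x z

end Translation

theorem ZMod.exists_dvd_eq_zmultiples (n : ℕ) (H : AddSubgroup (ZMod n)) :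
    ∃ d, d ∣ n ∧ H = AddSubgroup.zmultiples (d : ZMod n) := by
  let f := Int.castAddHom (ZMod n)
  obtain ⟨a, ha⟩ := Int.subgroup_cyclic (H.comap f)
  rw [← AddSubgroup.zmultiples_eq_closure, ← Int.zmultiples_natAbs] at ha
  refine ⟨a.natAbs, ?_, ?_⟩
  · have hn : (n : ℤ) ∈ H.comap f := by simp [f, H.zero_mem]
    rw [ha, Int.mem_zmultiples_iff] at hn
    exact_mod_cast hn
  · rw [← AddSubgroup.map_comap_eq_self_of_surjective (f := f) ZMod.intCast_surjective H, ha,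
      AddMonoidHom.map_zmultiples]
    simp [f]

theorem ZMod.exists_eq_zmultiples_prime_pow {p : ℕ} (hp : p.Prime) (m : ℕ)
    (H : AddSubgroup (ZMod (p ^ m))) :
    ∃ j ≤ m, H = AddSubgroup.zmultiples ((p : ZMod (p ^ m)) ^ j) := by
  obtain ⟨d, hd, rfl⟩ := ZMod.exists_dvd_eq_zmultiples _ H
  obtain ⟨j, hj, rfl⟩ := (Nat.dvd_prime_pow hp).1 hd
  exact ⟨j, hj, by rw [Nat.cast_pow]⟩

theorem ZMod.addOrderOf_prime_pow {p : ℕ} (hp : p.Prime) {m j : ℕ} (hj : j ≤ m) :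
    addOrderOf ((p : ZMod (p ^ m)) ^ j) = p ^ (m - j) := by
  rw [← Nat.cast_pow, ZMod.addOrderOf_coe _ (pow_ne_zero m hp.ne_zero),
    Nat.gcd_eq_right (pow_dvd_pow p hj), Nat.pow_div hj hp.pos]

theorem ZMod.injOn_zmultiples_prime_pow {p : ℕ} (hp : p.Prime) (m : ℕ) :
    Set.InjOn (fun j => AddSubgroup.zmultiples ((p : ZMod (p ^ m)) ^ j)) (Set.Iic m) := by
  intro j hj k hk hjk
  have hcard := congrArg (fun H : AddSubgroup (ZMod (p ^ m)) => Nat.card H) hjk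
  simp only [Nat.card_zmultiples, ZMod.addOrderOf_prime_pow hp hj,
    ZMod.addOrderOf_prime_pow hp hk] at hcard
  have := Nat.pow_right_injective hp.two_le hcard
  simp only [Set.mem_Iic] at hj hk
  omega

theorem fixed_partitions_eq_coset_partitions_general (p m : ℕ) (hp : p.Prime) :
    {P : Set (Set (ZMod (p ^ m))) | Setoid.IsPartition P ∧
        ∀ y : ZMod (p ^ m), ∀ A ∈ P, (fun x => x + y) '' A ∈ P} =
      {P | ∃ j : ℕ, j ≤ m ∧
        P = {S | ∃ x : ZMod (p ^ m),
          S = (fun z => x + z) '' (AddSubgroup.zmultiples ((p : ZMod (p ^ m)) ^ j) : Set (ZMod (p ^ m)))}} ∧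
    {P : Set (Set (ZMod (p ^ m))) | Setoid.IsPartition P ∧
        ∀ y : ZMod (p ^ m), ∀ A ∈ P, (fun x => x + y) '' A ∈ P}.ncard = m + 1 := by
  let C := fun j => cosetPartition (AddSubgroup.zmultiples ((p : ZMod (p ^ m)) ^ j))
  have hfixed : {P | Setoid.IsPartition P ∧ IsTranslationInvariant P} = C '' Set.Iic m := by
    ext P
    constructor
    · rintro ⟨hP, hT⟩
      obtain ⟨H, rfl⟩ := exists_eq_cosetPartition hP hT
      obtain ⟨j, hj, rfl⟩ := ZMod.exists_eq_zmultiples_prime_pow hp m H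
      exact ⟨j, hj, rfl⟩
    · rintro ⟨j, -, rfl⟩
      exact ⟨isPartition_cosetPartition _, isTranslationInvariant_cosetPartition _⟩
  refine ⟨hfixed.trans ?_, (congrArg Set.ncard hfixed).trans ?_⟩
  · -- `x +ᵥ s` unfolds to `(fun z => x + z) '' s`, so only the equations need flipping.
    ext P
    exact ⟨fun ⟨j, hj, hP⟩ => ⟨j, hj, hP.symm⟩, fun ⟨j, hj, hP⟩ => ⟨j, hj, hP.symm⟩⟩
  · have hC : Set.InjOn C (Set.Iic m) :=
      cosetPartition_injective.comp_injOn (ZMod.injOn_zmultiples_prime_pow hp m)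
    rw [hC.ncard_image, Set.ncard_Iic_nat]

theorem fixed_partitions_eq_coset_partitions (p m : ℕ) (hp : p.Prime) (hm : 0 < m) :
    {P : Set (Set (ZMod (p ^ m))) | Setoid.IsPartition P ∧
        ∀ y : ZMod (p ^ m), ∀ A ∈ P, (fun x => x + y) '' A ∈ P} =
      {P | ∃ j : ℕ, j ≤ m ∧
        P = {S | ∃ x : ZMod (p ^ m),
          S = (fun z => x + z) '' (AddSubgroup.zmultiples ((p : ZMod (p ^ m)) ^ j) : Set (ZMod (p ^ m)))}} ∧
    {P : Set (Set (ZMod (p ^ m))) | Setoid.IsPartition P ∧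
        ∀ y : ZMod (p ^ m), ∀ A ∈ P, (fun x => x + y) '' A ∈ P}.ncard = m + 1 :=
  fixed_partitions_eq_coset_partitions_general p m hp
end
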